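/- Pathwise observability threshold (Babaali–Egerstedt): for all positive integers s and n there exists a finite N = N(s,n) such that for every autonomous switched linear system with s modes given by matrices A_1,…,A_s ∈ ℝ^{n×n} and C_1,…,C_s ∈ ℝ^{1×n}, the following holds: if a mode sequence σ_0,…,σ_{N−1} ∈ {1,…,s} satisfies rank(O(σ_{0:N−1})) < n, then for every length L ∈ ℕ there exists a mode sequence σ̂ of length L such that the row space of O(σ̂) is contained in the row space of O(σ_{0:N−1}), i.e. Range(O(σ̂)^T) ⊆ Range(O(σ_{0:N−1})^T); in particular Null(O(σ_{0:N−1})) ⊆ Null(O(σ̂)). -/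

import Mathlib

open Matrix

/-- The state-transition matrix `A_{σ_{k-1}} ⋯ A_{σ_0}` of the autonomous
switched linear system `x_{k+1} = A_{σ_k} x_k` (equal to `1` for `k = 0`). -/
def switchedTrans {n s : ℕ} (A : Fin s → Matrix (Fin n) (Fin n) ℝ)
    (σ : ℕ → Fin s) : ℕ → Matrix (Fin n) (Fin n) ℝ
  | 0 => 1
  | k + 1 => A (σ k) * switchedTrans A σ k

/-- The observability matrix along the mode sequence `σ_0, …, σ_{L-1}` of the
switched linear system with state matrices `A i` and scalar-output rows `C i`:
its `k`-th row is `C_{σ_k} A_{σ_{k-1}} ⋯ A_{σ_0}`. -/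
def switchedObs {n s : ℕ} (A : Fin s → Matrix (Fin n) (Fin n) ℝ)
    (C : Fin s → Fin n → ℝ) (σ : ℕ → Fin s) (L : ℕ) :
    Matrix (Fin L) (Fin n) ℝ :=
  Matrix.of fun k => Matrix.vecMul (C (σ (k : ℕ))) (switchedTrans A σ (k : ℕ))

/-!
Encode the system `(A, C)` together with a matrix `V` whose columns span `Null O(σ_{0:N-1})` as
one point of a fixed affine space over `ℝ`. The points for which *some* mode sequence of length
`m` annihilates every column of `V` form an algebraic set `X_m`: a finite union, over the words
of length `m`, of common zero sets of the entries of `O(w) V`, which are polynomials in the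
coordinates. The sets `X_m` decrease with `m`, so their vanishing ideals increase and, by
Hilbert's basis theorem, stabilise at some `N` that depends only on `(s, n)`; closedness of the
`X_m` turns this into `X_N ⊆ X_L` for every `L`. The row-space inclusion is the dual of the
resulting kernel inclusion.
-/

namespace Matrix

variable {K m n : Type*} [Field K]

theorem mul_eq_zero_iff_range_le_ker [Fintype n] {l : Type*} [Fintype l] [DecidableEq l]
    (M : Matrix m n K) (V : Matrix n l K) :
    M * V = 0 ↔ LinearMap.range V.mulVecLin ≤ LinearMap.ker M.mulVecLin := by
  rw [LinearMap.range_le_ker_iff, ← Matrix.mulVecLin_mul, ← Matrix.toLin'_apply',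
    LinearEquiv.map_eq_zero_iff]

theorem exists_range_mulVecLin_eq [Fintype n] [DecidableEq n] (W : Submodule K (n → K)) :
    ∃ V : Matrix n n K, LinearMap.range V.mulVecLin = W := by
  obtain ⟨g, hg⟩ := W.subtype.exists_leftInverse_of_injective W.ker_subtype
  refine ⟨LinearMap.toMatrix' (W.subtype ∘ₗ g), ?_⟩
  have hg_surj : LinearMap.range g = ⊤ :=
    LinearMap.range_eq_top.2 fun x => ⟨x, LinearMap.congr_fun hg x⟩
  rw [← Matrix.toLin'_apply', Matrix.toLin'_toMatrix', LinearMap.range_comp, hg_surj,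
    Submodule.map_top, Submodule.range_subtype]

variable [Fintype m] [Fintype n] [DecidableEq m] [DecidableEq n]

theorem mulVecLin_transpose_eq_dualMap (M : Matrix m n K) :
    Mᵀ.mulVecLin = (dotProductEquiv K n).symm.toLinearMap ∘ₗ M.mulVecLin.dualMap ∘ₗ
      (dotProductEquiv K m).toLinearMap := by
  refine LinearMap.ext fun w => (dotProductEquiv K n).injective (LinearMap.ext fun x => ?_)
  simp only [LinearMap.coe_comp, LinearEquiv.coe_coe, Function.comp_apply,
    LinearEquiv.apply_symm_apply, LinearMap.dualMap_apply, dotProductEquiv_apply_apply,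
    mulVecLin_apply, mulVec_transpose, dotProduct_mulVec]

theorem range_mulVecLin_transpose_le_of_ker_le {m' : Type*} [Fintype m'] [DecidableEq m']
    (M : Matrix m n K) (M' : Matrix m' n K)
    (h : LinearMap.ker M.mulVecLin ≤ LinearMap.ker M'.mulVecLin) :
    LinearMap.range M'ᵀ.mulVecLin ≤ LinearMap.range Mᵀ.mulVecLin := by
  simp only [mulVecLin_transpose_eq_dualMap, LinearMap.range_comp,
    LinearMap.range_eq_top.2 (LinearEquiv.surjective _), Submodule.map_top,
    LinearMap.range_dualMap_eq_dualAnnihilator_ker]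
  exact Submodule.map_mono (Submodule.dualAnnihilator_anti h)

end Matrix

namespace MvPolynomial

variable {σ k : Type*} [Field k]

theorem zeroLocus_mul (I J : Ideal (MvPolynomial σ k)) :
    zeroLocus k (I * J) = zeroLocus k I ∪ zeroLocus k J := by
  refine subset_antisymm (fun x hx => ?_)
    (Set.union_subset (zeroLocus_anti_mono Ideal.mul_le_left)
      (zeroLocus_anti_mono Ideal.mul_le_right))
  by_contra hxIJ
  simp only [Set.mem_union, mem_zeroLocus_iff, not_or, not_forall] at hxIJ
  obtain ⟨⟨f, hf, hfx⟩, ⟨g, hg, hgx⟩⟩ := hxIJ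
  have hfg := mem_zeroLocus_iff.1 hx (f * g) (Ideal.mul_mem_mul hf hg)
  exact mul_ne_zero hfx hgx (by simpa using hfg)

theorem zeroLocus_prod {ι : Type*} (t : Finset ι) (I : ι → Ideal (MvPolynomial σ k)) :
    zeroLocus k (∏ i ∈ t, I i) = ⋃ i ∈ t, zeroLocus k (I i) := by
  classical
  induction t using Finset.induction_on with
  | empty => simp [zeroLocus_top]
  | insert i t hi ih => simp [Finset.prod_insert hi, zeroLocus_mul, ih]

theorem mem_zeroLocus_span_entries_iff {m n : Type*} (P : Matrix m n (MvPolynomial σ k))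
    (x : σ → k) :
    x ∈ zeroLocus k (Ideal.span (Set.range fun ij : m × n => P ij.1 ij.2)) ↔
      P.map (eval x) = 0 := by
  rw [zeroLocus_span, Set.mem_ofPred_eq, Set.forall_mem_range, ← Matrix.ext_iff]
  simp [Prod.forall]

theorem exists_forall_zeroLocus_subset_of_antitone [Finite σ]
    (I : ℕ → Ideal (MvPolynomial σ k)) (hI : Antitone fun m => zeroLocus k (I m)) :
    ∃ N, ∀ m, zeroLocus k (I N) ⊆ zeroLocus k (I m) := by
  have hgc := zeroLocus_vanishingIdeal_galoisConnection (σ := σ) (k := k) (K := k)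
  obtain ⟨N, hN⟩ := monotone_stabilizes_iff_noetherian.mpr inferInstance
    ⟨fun m => vanishingIdeal k (zeroLocus k (I m)),
      fun _ _ h => vanishingIdeal_anti_mono (hI h)⟩
  refine ⟨N, fun m => (le_total m N).elim (fun hm => hI hm) fun hm => ?_⟩
  have hV : vanishingIdeal k (zeroLocus k (I N)) = vanishingIdeal k (zeroLocus k (I m)) :=
    hN m hm
  have hZ := congrArg (zeroLocus k) hV
  rw [hgc.l_u_l_eq_l, hgc.l_u_l_eq_l] at hZ
  exact hZ.le

end MvPolynomial

/-! `switchedTrans` and `switchedObs` over an arbitrary semiring, so that they can be formed with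
polynomial entries. -/

section TransitionMatrix

variable {R S : Type*} [Semiring R] [Semiring S] {n s : ℕ}

def transMatrix (A : Fin s → Matrix (Fin n) (Fin n) R) (σ : ℕ → Fin s) :
    ℕ → Matrix (Fin n) (Fin n) R
  | 0 => 1
  | k + 1 => A (σ k) * transMatrix A σ k

def obsMatrix (A : Fin s → Matrix (Fin n) (Fin n) R) (C : Fin s → Fin n → R)
    (σ : ℕ → Fin s) (L : ℕ) : Matrix (Fin L) (Fin n) R :=
  of fun k => vecMul (C (σ k)) (transMatrix A σ k)

theorem switchedTrans_eq_transMatrix (A : Fin s → Matrix (Fin n) (Fin n) ℝ) (σ : ℕ → Fin s)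
    (k : ℕ) : switchedTrans A σ k = transMatrix A σ k := by
  induction k with
  | zero => rfl
  | succ k ih => rw [switchedTrans, transMatrix, ih]

theorem switchedObs_eq_obsMatrix (A : Fin s → Matrix (Fin n) (Fin n) ℝ)
    (C : Fin s → Fin n → ℝ) (σ : ℕ → Fin s) (L : ℕ) :
    switchedObs A C σ L = obsMatrix A C σ L := by
  ext k
  simp only [switchedObs, obsMatrix, of_apply, switchedTrans_eq_transMatrix]

theorem transMatrix_congr (A : Fin s → Matrix (Fin n) (Fin n) R) {σ τ : ℕ → Fin s} {k : ℕ}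
    (h : ∀ j < k, σ j = τ j) : transMatrix A σ k = transMatrix A τ k := by
  induction k with
  | zero => rfl
  | succ k ih =>
    rw [transMatrix, transMatrix, h k k.lt_succ_self, ih fun j hj => h j (hj.trans k.lt_succ_self)]

theorem obsMatrix_congr (A : Fin s → Matrix (Fin n) (Fin n) R) (C : Fin s → Fin n → R)
    {σ τ : ℕ → Fin s} {L : ℕ} (h : ∀ j < L, σ j = τ j) :
    obsMatrix A C σ L = obsMatrix A C τ L := by
  ext k
  simp only [obsMatrix, of_apply, h k k.isLt,
    transMatrix_congr A fun j hj => h j (hj.trans k.isLt)]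

theorem transMatrix_map (f : R →+* S) (A : Fin s → Matrix (Fin n) (Fin n) R)
    (σ : ℕ → Fin s) (k : ℕ) :
    (transMatrix A σ k).map f = transMatrix (fun a => (A a).map f) σ k := by
  induction k with
  | zero => exact Matrix.map_one f f.map_zero f.map_one
  | succ k ih => rw [transMatrix, transMatrix, Matrix.map_mul, ih]

theorem obsMatrix_map (f : R →+* S) (A : Fin s → Matrix (Fin n) (Fin n) R)
    (C : Fin s → Fin n → R) (σ : ℕ → Fin s) (L : ℕ) :
    (obsMatrix A C σ L).map f = obsMatrix (fun a => (A a).map f) (fun a => f ∘ C a) σ L := by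
  ext k j
  simp only [obsMatrix, map_apply, of_apply, RingHom.map_vecMul, transMatrix_map]

end TransitionMatrix

/-- Coordinates of a triple `(A, C, V)`: the entries of the `s` state matrices, of the `s` output
rows, and of an `n × n` matrix `V`. -/
abbrev SystemCoord (s n : ℕ) :=
  (Fin s × Fin n × Fin n) ⊕ (Fin s × Fin n) ⊕ (Fin n × Fin n)

namespace SystemCoord

variable {R S : Type*} {s n : ℕ}

def stateMat (p : SystemCoord s n → R) (a : Fin s) : Matrix (Fin n) (Fin n) R :=
  of fun i j => p (.inl (a, i, j))

def outputRow (p : SystemCoord s n → R) (a : Fin s) : Fin n → R :=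
  fun i => p (.inr (.inl (a, i)))

def testMat (p : SystemCoord s n → R) : Matrix (Fin n) (Fin n) R :=
  of fun i j => p (.inr (.inr (i, j)))

def mk (A : Fin s → Matrix (Fin n) (Fin n) R) (C : Fin s → Fin n → R)
    (V : Matrix (Fin n) (Fin n) R) : SystemCoord s n → R
  | .inl (a, i, j) => A a i j
  | .inr (.inl (a, i)) => C a i
  | .inr (.inr (i, j)) => V i j

def hidingMatrix [Semiring R] (p : SystemCoord s n → R) (σ : ℕ → Fin s) (m : ℕ) :
    Matrix (Fin m) (Fin n) R :=
  obsMatrix (stateMat p) (outputRow p) σ m * testMat p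

theorem hidingMatrix_mk [Semiring R] (A : Fin s → Matrix (Fin n) (Fin n) R)
    (C : Fin s → Fin n → R) (V : Matrix (Fin n) (Fin n) R) (σ : ℕ → Fin s) (m : ℕ) :
    hidingMatrix (mk A C V) σ m = obsMatrix A C σ m * V :=
  rfl

theorem hidingMatrix_map [Semiring R] [Semiring S] (f : R →+* S) (p : SystemCoord s n → R)
    (σ : ℕ → Fin s) (m : ℕ) : (hidingMatrix p σ m).map f = hidingMatrix (f ∘ p) σ m := by
  rw [hidingMatrix, Matrix.map_mul, obsMatrix_map]
  rfl

def hiddenLocus (k : Type*) [Field k] (s n m : ℕ) : Set (SystemCoord s n → k) :=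
  {p | ∃ σ, hidingMatrix p σ m = 0}

theorem hiddenLocus_antitone (k : Type*) [Field k] (s n : ℕ) : Antitone (hiddenLocus k s n) := by
  rintro m m' hm p ⟨σ, hσ⟩
  refine ⟨σ, Matrix.ext fun i j => ?_⟩
  simpa [hidingMatrix, Matrix.mul_apply, obsMatrix] using congrFun₂ hσ (Fin.castLE hm i) j

noncomputable def hidingIdeal (k : Type*) [Field k] {s n : ℕ} (σ : ℕ → Fin s) (m : ℕ) :
    Ideal (MvPolynomial (SystemCoord s n) k) :=
  Ideal.span (Set.range fun ij : Fin m × Fin n => hidingMatrix MvPolynomial.X σ m ij.1 ij.2)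

theorem mem_zeroLocus_hidingIdeal_iff {k : Type*} [Field k] {s n : ℕ} {σ : ℕ → Fin s}
    {m : ℕ} {x : SystemCoord s n → k} :
    x ∈ MvPolynomial.zeroLocus k (hidingIdeal k σ m) ↔ hidingMatrix x σ m = 0 := by
  rw [hidingIdeal, MvPolynomial.mem_zeroLocus_span_entries_iff, hidingMatrix_map,
    show ⇑(MvPolynomial.eval x) ∘ MvPolynomial.X = x from funext MvPolynomial.eval_X]

theorem hiddenLocus_eq_zeroLocus (k : Type*) [Field k] {s : ℕ} (n : ℕ) (a₀ : Fin s)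
    (m : ℕ) :
    hiddenLocus k s n m = MvPolynomial.zeroLocus k (∏ w : Fin m → Fin s,
      hidingIdeal k (fun j => if h : j < m then w ⟨j, h⟩ else a₀) m) := by
  ext x
  simp only [MvPolynomial.zeroLocus_prod, Set.mem_iUnion, Finset.mem_univ, exists_true_left,
    mem_zeroLocus_hidingIdeal_iff]
  refine ⟨fun ⟨σ, hσ⟩ => ⟨fun j => σ j, ?_⟩, fun ⟨w, hw⟩ => ⟨_, hw⟩⟩
  rwa [hidingMatrix, obsMatrix_congr _ _ (τ := σ) fun j hj => dif_pos hj]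

theorem exists_hiddenLocus_subset (k : Type*) [Field k] {s : ℕ} (hs : 0 < s) (n : ℕ) :
    ∃ N, ∀ m, hiddenLocus k s n N ⊆ hiddenLocus k s n m := by
  have hanti := hiddenLocus_antitone k s n
  rw [funext (hiddenLocus_eq_zeroLocus k n ⟨0, hs⟩)] at hanti ⊢
  exact MvPolynomial.exists_forall_zeroLocus_subset_of_antitone _ hanti

theorem mk_mem_hiddenLocus_iff {s n m : ℕ} {A : Fin s → Matrix (Fin n) (Fin n) ℝ}
    {C : Fin s → Fin n → ℝ} {V : Matrix (Fin n) (Fin n) ℝ} :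
    mk A C V ∈ hiddenLocus ℝ s n m ↔
      ∃ σ, LinearMap.range V.mulVecLin ≤ LinearMap.ker (switchedObs A C σ m).mulVecLin := by
  simp only [hiddenLocus, Set.mem_ofPred_eq, hidingMatrix_mk, ← switchedObs_eq_obsMatrix,
    mul_eq_zero_iff_range_le_ker]

end SystemCoord

theorem pathwise_observability_threshold_general (s n : ℕ) (hs : 0 < s) :
    ∃ N : ℕ, 0 < N ∧
      ∀ (A : Fin s → Matrix (Fin n) (Fin n) ℝ) (C : Fin s → Fin n → ℝ)
        (σ : ℕ → Fin s),
        (switchedObs A C σ N).rank < n →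
        ∀ L : ℕ, ∃ σhat : ℕ → Fin s,
          LinearMap.range (Matrix.mulVecLin (switchedObs A C σhat L)ᵀ) ≤
            LinearMap.range (Matrix.mulVecLin (switchedObs A C σ N)ᵀ) ∧
          LinearMap.ker (Matrix.mulVecLin (switchedObs A C σ N)) ≤
            LinearMap.ker (Matrix.mulVecLin (switchedObs A C σhat L)) := by
  obtain ⟨N, hN⟩ := SystemCoord.exists_hiddenLocus_subset ℝ hs n
  refine ⟨N + 1, N.succ_pos, fun A C σ _ L => ?_⟩
  obtain ⟨V, hV⟩ :=
    exists_range_mulVecLin_eq (LinearMap.ker (switchedObs A C σ (N + 1)).mulVecLin)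
  have hσ : SystemCoord.mk A C V ∈ SystemCoord.hiddenLocus ℝ s n (N + 1) :=
    SystemCoord.mk_mem_hiddenLocus_iff.2 ⟨σ, hV.le⟩
  obtain ⟨σhat, hσhat⟩ := SystemCoord.mk_mem_hiddenLocus_iff.1
    (hN L (SystemCoord.hiddenLocus_antitone ℝ s n N.le_succ hσ))
  rw [hV] at hσhat
  exact ⟨σhat, range_mulVecLin_transpose_le_of_ker_le _ _ hσhat, hσhat⟩

/-- pathwise observability threshold, Babaali–Egerstedt.
For all positive `s` and `n` there is a finite `N = N(s, n)` such that for
every `s`-mode, `n`-dimensional, scalar-output switched linear system and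
every mode sequence `σ` whose length-`N` observability matrix has rank `< n`,
for every length `L` there is a mode sequence `σ̂` whose length-`L`
observability matrix has row space contained in that of `O(σ_{0:N-1})`;
in particular `Null(O(σ_{0:N-1})) ⊆ Null(O(σ̂))`. -/
theorem pathwise_observability_threshold (s n : ℕ) (hs : 0 < s) (hn : 0 < n) :
    ∃ N : ℕ, 0 < N ∧
      ∀ (A : Fin s → Matrix (Fin n) (Fin n) ℝ) (C : Fin s → Fin n → ℝ)
        (σ : ℕ → Fin s),
        (switchedObs A C σ N).rank < n →
        ∀ L : ℕ, ∃ σhat : ℕ → Fin s,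
          LinearMap.range (Matrix.mulVecLin (switchedObs A C σhat L)ᵀ) ≤
            LinearMap.range (Matrix.mulVecLin (switchedObs A C σ N)ᵀ) ∧
          LinearMap.ker (Matrix.mulVecLin (switchedObs A C σ N)) ≤
            LinearMap.ker (Matrix.mulVecLin (switchedObs A C σhat L)) :=
  pathwise_observability_threshold_general s n hs
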